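/- Symmetry identity II: for each pair of positive integers c, d, all n ≥ 0 and α ≥ 1, Σ_{l=0}^{n} binom(n,l) c^{n-l} d^{l} Σ_{i=0}^{c-1} Σ_{j=0}^{d-1} (β/a)^{(i+j)b} _{eH}P_{n-l,β}^{(α,m,r)}(dx + (d/c)i, d^m y, d^r z; k,a,b) _{eH}P_{l,β}^{(α,m,r)}(cX + (c/d)j, c^m Y, c^r Z; k,a,b) = Σ_{l=0}^{n} binom(n,l) d^{n-l} c^{l} Σ_{i=0}^{d-1} Σ_{j=0}^{c-1} (β/a)^{(i+j)b} _{eH}P_{n-l,β}^{(α,m,r)}(cx + (c/d)i, c^m y, c^r z; k,a,b) _{eH}P_{l,β}^{(α,m,r)}(dX + (d/c)j, d^m Y, d^r Z; k,a,b). -/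

import Mathlib

open scoped BigOperators

/-- The exponential series `e^{ct}` in `ℂ[[t]]`. -/
noncomputable def expC (c : ℂ) : PowerSeries ℂ :=
  PowerSeries.mk fun n => c ^ n / n.factorial

/-- The series `e^{y t^m} = ∑_k y^k t^{mk}/k!` in `ℂ[[t]]`. -/
noncomputable def expMonC (y : ℂ) (m : ℕ) : PowerSeries ℂ :=
  PowerSeries.mk fun n => if m ∣ n then y ^ (n / m) / (n / m).factorial else 0

/-!
Rescale the generating relation by `u`, evaluate it at the shifted points `v x + (v / u) i` and
sum with weights `q ^ i`, where `q = (β / a) ^ b`: the exponentials `e^{i v t}` then form a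
geometric sum, and since the denominator at `v t` equals `a ^ b (q e^{v t} - 1)`, multiplying by it
telescopes the sum to `a ^ b (q ^ u e^{u v t} - 1)`. So the product of the `x`-sum at `(c, d)` with
the `X`-sum at `(d, c)`, times a nonzero factor symmetric in `c` and `d`, is itself symmetric in
`c` and `d`. Cancelling in the integral domain `ℂ⟦X⟧` and reading off `n`-th coefficients gives
the identity.
-/

open PowerSeries Finset

section ExponentialGeneratingFunction

variable {K : Type*} [Field K]

noncomputable def egf (f : ℕ → K) : K⟦X⟧ :=
  mk fun n => f n / n.factorial

theorem factorial_mul_coeff_egf [CharZero K] (f : ℕ → K) (n : ℕ) :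
    (n.factorial : K) * coeff n (egf f) = f n := by
  rw [egf, coeff_mk, mul_div_cancel₀]
  exact_mod_cast n.factorial_ne_zero

theorem rescale_egf (a : K) (f : ℕ → K) : rescale a (egf f) = egf fun n => a ^ n * f n := by
  rw [egf, egf, rescale_mk]
  simp only [mul_div_assoc]

theorem C_mul_egf (a : K) (f : ℕ → K) : C a * egf f = egf fun n => a * f n := by
  ext n
  simp only [egf, coeff_C_mul, coeff_mk, mul_div_assoc]

theorem sum_egf {ι : Type*} (s : Finset ι) (f : ι → ℕ → K) :
    ∑ i ∈ s, egf (f i) = egf fun n => ∑ i ∈ s, f i n := by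
  ext n
  simp only [egf, map_sum, coeff_mk, sum_div]

theorem egf_mul_egf [CharZero K] (f g : ℕ → K) :
    egf f * egf g = egf fun n => ∑ l ∈ range (n + 1), (n.choose l : K) * f (n - l) * g l := by
  ext n
  rw [coeff_mul, ← Finset.Nat.sum_antidiagonal_swap]
  simp only [Prod.fst_swap, Prod.snd_swap]
  rw [Finset.Nat.sum_antidiagonal_eq_sum_range_succ
    (fun i j => coeff j (egf f) * coeff i (egf g))]
  simp only [egf, coeff_mk, sum_div]
  refine sum_congr rfl fun l hl => ?_
  have hln : l ≤ n := Nat.lt_succ_iff.mp (mem_range.mp hl)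
  rw [← Nat.choose_mul_factorial_mul_factorial hln]
  have : (l.factorial : K) ≠ 0 := by exact_mod_cast l.factorial_ne_zero
  have : ((n - l).factorial : K) ≠ 0 := by exact_mod_cast (n - l).factorial_ne_zero
  have : (n.choose l : K) ≠ 0 := by exact_mod_cast (Nat.choose_pos hln).ne'
  push_cast
  field_simp

theorem factorial_mul_coeff_weighted_sum_mul [CharZero K] (q c d : K) (s t : ℕ) (f g : ℕ → ℕ → K)
    (n : ℕ) :
    (n.factorial : K) * coeff n
        ((∑ i ∈ range s, C (q ^ i) * rescale c (egf fun p => f p i)) *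
          ∑ j ∈ range t, C (q ^ j) * rescale d (egf fun p => g p j)) =
      ∑ l ∈ range (n + 1), (n.choose l : K) * c ^ (n - l) * d ^ l *
        ∑ i ∈ range s, ∑ j ∈ range t, q ^ (i + j) * f (n - l) i * g l j := by
  simp only [rescale_egf, C_mul_egf, sum_egf, egf_mul_egf, factorial_mul_coeff_egf]
  refine sum_congr rfl fun l _ => ?_
  rw [mul_assoc, sum_mul_sum]
  simp only [mul_sum]
  refine sum_congr rfl fun i _ => sum_congr rfl fun j _ => ?_
  ring

end ExponentialGeneratingFunction

theorem rescale_C {R : Type*} [CommSemiring R] (a b : R) : rescale a (C b) = C b := by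
  ext n
  cases n <;> simp [coeff_C]

theorem expC_eq_rescale_exp (u : ℂ) : expC u = rescale u (exp ℂ) := by
  ext n
  simp [expC, coeff_exp, div_eq_mul_inv]

theorem expC_mul_expC (u v : ℂ) : expC u * expC v = expC (u + v) := by
  simp only [expC_eq_rescale_exp, exp_mul_exp_eq_exp_add]

theorem expC_pow (u : ℂ) (i : ℕ) : expC u ^ i = expC (i * u) := by
  induction i with
  | zero => ext n; cases n <;> simp [expC, coeff_one]
  | succ i ih => rw [pow_succ, ih, expC_mul_expC]; push_cast; ring_nf

theorem rescale_expC (u v : ℂ) : rescale u (expC v) = expC (u * v) := by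
  rw [expC_eq_rescale_exp, expC_eq_rescale_exp, rescale_rescale, mul_comm]

theorem rescale_expMonC (u y : ℂ) (m : ℕ) : rescale u (expMonC y m) = expMonC (u ^ m * y) m := by
  ext n
  simp only [coeff_rescale, expMonC, coeff_mk]
  split_ifs with h
  · rw [mul_pow, ← pow_mul, Nat.mul_div_cancel' h]
    ring
  · rw [mul_zero]

theorem constantCoeff_expMonC (y : ℂ) (m : ℕ) : constantCoeff (expMonC y m) = 1 := by
  simp [expMonC, ← coeff_zero_eq_constantCoeff_apply]

theorem C_mul_expC_sub_C_ne_zero {A B u : ℂ} (hA : A ≠ 0) (hu : u ≠ 0) :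
    C B * expC u - C A ≠ 0 := by
  intro h
  have h0 := congrArg (coeff 0) h
  have h1 := congrArg (coeff 1) h
  simp [expC] at h0 h1
  rcases h1 with rfl | h1
  · exact hA (by simpa using h0.symm)
  · exact hu h1

theorem one_sub_C_mul_X_pow_ne_zero (w : ℂ) {r : ℕ} (hr : r ≠ 0) :
    (1 : ℂ⟦X⟧) - C w * X ^ r ≠ 0 := by
  intro h
  simpa [coeff_X_pow, hr, Ne.symm hr] using congrArg (coeff 0) h

theorem mul_ofReal_cpow_of_pos {a : ℝ} (ha : 0 < a) (z s : ℂ) :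
    (z * a) ^ s = z ^ s * (a : ℂ) ^ s := by
  rcases eq_or_ne z 0 with rfl | hz
  · rcases eq_or_ne s 0 with rfl | hs
    · simp
    · simp [Complex.zero_cpow hs]
  · have ha' : (a : ℂ) ≠ 0 := Complex.ofReal_ne_zero.mpr ha.ne'
    rw [Complex.cpow_def_of_ne_zero (mul_ne_zero hz ha'), Complex.cpow_def_of_ne_zero hz,
      Complex.cpow_def_of_ne_zero ha', Complex.log_mul_ofReal a ha z hz, ← Complex.exp_add,
      Complex.ofReal_log ha.le]
    ring_nf

def IsApostolEGF (c₀ A B : ℂ) (k m r α : ℕ) (G : ℝ → ℝ → ℝ → ℂ⟦X⟧) : Prop :=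
  ∀ x y z : ℝ, (C c₀ * X ^ k) ^ α * (expC x * expMonC y m) =
    (C B * expC 1 - C A) ^ α * ((1 - C (z : ℂ) * X ^ r) * G x y z)

noncomputable def weightedShiftSum (q : ℂ) (G : ℝ → ℝ → ℝ → ℂ⟦X⟧) (m r u v : ℕ) (x y z : ℝ) :
    ℂ⟦X⟧ :=
  ∑ i ∈ range u, C (q ^ i) * rescale (u : ℂ) (G (v * x + v / u * i) (v ^ m * y) (v ^ r * z))

namespace IsApostolEGF

variable {c₀ A B : ℂ} {k m r α : ℕ} {G : ℝ → ℝ → ℝ → ℂ⟦X⟧}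

theorem truncation_exponent_ne_zero (hG : IsApostolEGF c₀ A B k m r α G) (hc₀ : c₀ ≠ 0) :
    r ≠ 0 := by
  rintro rfl
  have h := hG 0 0 1
  rw [pow_zero, mul_one, Complex.ofReal_one, map_one, sub_self, zero_mul, mul_zero] at h
  refine mul_ne_zero (pow_ne_zero _ (mul_ne_zero ?_ (pow_ne_zero _ X_ne_zero))) ?_ h
  · exact fun hC => hc₀ (by simpa using congrArg constantCoeff hC)
  · intro hE
    simpa [constantCoeff_expMonC, expC] using congrArg constantCoeff hE

theorem rescale (hG : IsApostolEGF c₀ A B k m r α G) (u : ℂ) (x y z : ℝ) :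
    (C c₀ * (C u * X) ^ k) ^ α * (expC (u * x) * expMonC (u ^ m * y) m) =
      (C B * expC u - C A) ^ α * ((1 - C (z : ℂ) * (C u * X) ^ r) * rescale u (G x y z)) := by
  simpa only [map_mul, map_pow, map_sub, map_one, rescale_X, rescale_expC, rescale_expMonC,
    rescale_C, mul_one] using congrArg (PowerSeries.rescale u) (hG x y z)

theorem rescale_shift (hG : IsApostolEGF c₀ A B k m r α G) {u : ℕ} (hu : u ≠ 0) (v i : ℕ)
    (x y z : ℝ) :
    (C c₀ * (C (u : ℂ) * X) ^ k) ^ α * (expC (u * v * x) * expMonC ((u * v) ^ m * y) m) *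
        expC v ^ i =
      (C B * expC u - C A) ^ α * ((1 - C (((u : ℂ) * v) ^ r * z) * X ^ r) *
        PowerSeries.rescale (u : ℂ) (G (v * x + v / u * i) (v ^ m * y) (v ^ r * z))) := by
  have hu' : (u : ℂ) ≠ 0 := Nat.cast_ne_zero.mpr hu
  have hx : expC (u * ((v * x + v / u * i : ℝ) : ℂ)) = expC (u * v * x) * expC v ^ i := by
    rw [expC_pow, expC_mul_expC]
    push_cast
    field_simp
  have hy : (u : ℂ) ^ m * ((v ^ m * y : ℝ) : ℂ) = (u * v) ^ m * y := by
    push_cast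
    ring
  have hz : C ((v ^ r * z : ℝ) : ℂ) * (C (u : ℂ) * X) ^ r = C (((u : ℂ) * v) ^ r * z) * X ^ r := by
    push_cast
    simp only [mul_pow, map_mul, map_pow]
    ring
  have h := hG.rescale u (v * x + v / u * i) (v ^ m * y) (v ^ r * z)
  rw [hx, hy, hz] at h
  linear_combination h

theorem denom_mul_weightedShiftSum (hG : IsApostolEGF c₀ A B k m r α G) {q : ℂ}
    (hBq : B = q * A) {u : ℕ} (hu : u ≠ 0) (v : ℕ) (x y z : ℝ) :
    (C B * expC u - C A) ^ α * (C B * expC v - C A) *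
        ((1 - C (((u : ℂ) * v) ^ r * z) * X ^ r) * weightedShiftSum q G m r u v x y z) =
      (C c₀ * (C (u : ℂ) * X) ^ k) ^ α * (expC (u * v * x) * expMonC ((u * v) ^ m * y) m) *
        (C A * ((C q * expC v) ^ u - 1)) := by
  have hdenom : C B * expC v - C A = C A * (C q * expC v - 1) := by
    rw [hBq, map_mul]
    ring
  have hsum : (C B * expC u - C A) ^ α *
        ((1 - C (((u : ℂ) * v) ^ r * z) * X ^ r) * weightedShiftSum q G m r u v x y z) =
      (C c₀ * (C (u : ℂ) * X) ^ k) ^ α * (expC (u * v * x) * expMonC ((u * v) ^ m * y) m) *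
        ∑ i ∈ range u, (C q * expC v) ^ i := by
    simp only [weightedShiftSum, mul_sum]
    refine sum_congr rfl fun i _ => ?_
    rw [mul_pow (C q), ← map_pow]
    linear_combination (-C (q ^ i)) * hG.rescale_shift hu v i x y z
  rw [hdenom, ← mul_geom_sum]
  linear_combination (C A * (C q * expC v - 1)) * hsum

theorem weightedShiftSum_mul_comm (hG : IsApostolEGF c₀ A B k m r α G) (hc₀ : c₀ ≠ 0)
    (hA : A ≠ 0) {q : ℂ} (hBq : B = q * A) {u v : ℕ} (hu : u ≠ 0) (hv : v ≠ 0)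
    (x₁ y₁ z₁ x₂ y₂ z₂ : ℝ) :
    weightedShiftSum q G m r u v x₁ y₁ z₁ * weightedShiftSum q G m r v u x₂ y₂ z₂ =
      weightedShiftSum q G m r v u x₁ y₁ z₁ * weightedShiftSum q G m r u v x₂ y₂ z₂ := by
  have h₁ := hG.denom_mul_weightedShiftSum hBq hu v x₁ y₁ z₁
  have h₂ := hG.denom_mul_weightedShiftSum hBq hv u x₂ y₂ z₂
  have h₃ := hG.denom_mul_weightedShiftSum hBq hv u x₁ y₁ z₁
  have h₄ := hG.denom_mul_weightedShiftSum hBq hu v x₂ y₂ z₂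
  simp only [mul_comm (v : ℂ) u] at h₂ h₃
  have hr := hG.truncation_exponent_ne_zero hc₀
  have hDu := C_mul_expC_sub_C_ne_zero (B := B) hA (Nat.cast_ne_zero.mpr hu)
  have hDv := C_mul_expC_sub_C_ne_zero (B := B) hA (Nat.cast_ne_zero.mpr hv)
  have hN : (C B * expC u - C A) ^ (α + 1) * (C B * expC v - C A) ^ (α + 1) *
      ((1 - C (((u : ℂ) * v) ^ r * z₁) * X ^ r) * (1 - C (((u : ℂ) * v) ^ r * z₂) * X ^ r)) ≠ 0 :=
    mul_ne_zero (mul_ne_zero (pow_ne_zero _ hDu) (pow_ne_zero _ hDv))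
      (mul_ne_zero (one_sub_C_mul_X_pow_ne_zero _ hr) (one_sub_C_mul_X_pow_ne_zero _ hr))
  refine mul_left_cancel₀ hN ?_
  -- the two sides are the products of the left sides of `h₁, h₂` and of `h₃, h₄`, and the
  -- products of their right sides agree
  linear_combination congr(HMul.hMul $h₁ $h₂) - congr(HMul.hMul $h₃ $h₄)

end IsApostolEGF

theorem factorial_mul_coeff_weightedShiftSum_mul (q : ℂ) (P : ℕ → ℝ → ℝ → ℝ → ℂ)
    (m r u v : ℕ) (x₁ y₁ z₁ x₂ y₂ z₂ : ℝ) (n : ℕ) :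
    (n.factorial : ℂ) * coeff n
        (weightedShiftSum q (fun x y z => egf fun p => P p x y z) m r u v x₁ y₁ z₁ *
          weightedShiftSum q (fun x y z => egf fun p => P p x y z) m r v u x₂ y₂ z₂) =
      ∑ l ∈ range (n + 1), (n.choose l : ℂ) * (u : ℂ) ^ (n - l) * (v : ℂ) ^ l *
        ∑ i ∈ range u, ∑ j ∈ range v, q ^ (i + j) *
          P (n - l) ((v : ℝ) * x₁ + ((v : ℝ) / (u : ℝ)) * i) ((v : ℝ) ^ m * y₁) ((v : ℝ) ^ r * z₁) *
          P l ((u : ℝ) * x₂ + ((u : ℝ) / (v : ℝ)) * j) ((u : ℝ) ^ m * y₂) ((u : ℝ) ^ r * z₂) :=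
  factorial_mul_coeff_weighted_sum_mul q u v u v _ _ n

theorem symmetry_identity_II_general
    (a b : ℝ) (ha : 0 < a) (β : ℂ) (k m r α : ℕ)
    (EHP : ℕ → ℝ → ℝ → ℝ → ℂ)
    (hEHP : ∀ (x y z : ℝ),
      (PowerSeries.C ((((2 : ℝ) ^ ((1 : ℝ) - (k : ℝ)) : ℝ) : ℂ)) *
          PowerSeries.X ^ k) ^ α * (expC (x : ℂ) * expMonC (y : ℂ) m) =
        (PowerSeries.C (β ^ (b : ℂ)) * expC 1 - PowerSeries.C ((a ^ b : ℝ) : ℂ)) ^ α *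
          ((1 - PowerSeries.C (z : ℂ) * PowerSeries.X ^ r) *
            PowerSeries.mk (fun n => EHP n x y z / n.factorial)))
    (c d : ℕ) (hc : 0 < c) (hd : 0 < d) (x y z X1 Y1 Z1 : ℝ) (n : ℕ) :
    (∑ l ∈ Finset.range (n + 1), (n.choose l : ℂ) * (c : ℂ) ^ (n - l) * (d : ℂ) ^ l *
        ∑ i ∈ Finset.range c, ∑ j ∈ Finset.range d,
          ((β / (a : ℂ)) ^ (b : ℂ)) ^ (i + j) *
            EHP (n - l) ((d : ℝ) * x + ((d : ℝ) / (c : ℝ)) * i)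
              ((d : ℝ) ^ m * y) ((d : ℝ) ^ r * z) *
            EHP l ((c : ℝ) * X1 + ((c : ℝ) / (d : ℝ)) * j)
              ((c : ℝ) ^ m * Y1) ((c : ℝ) ^ r * Z1)) =
      ∑ l ∈ Finset.range (n + 1), (n.choose l : ℂ) * (d : ℂ) ^ (n - l) * (c : ℂ) ^ l *
        ∑ i ∈ Finset.range d, ∑ j ∈ Finset.range c,
          ((β / (a : ℂ)) ^ (b : ℂ)) ^ (i + j) *
            EHP (n - l) ((c : ℝ) * x + ((c : ℝ) / (d : ℝ)) * i)
              ((c : ℝ) ^ m * y) ((c : ℝ) ^ r * z) *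
            EHP l ((d : ℝ) * X1 + ((d : ℝ) / (c : ℝ)) * j)
              ((d : ℝ) ^ m * Y1) ((d : ℝ) ^ r * Z1) := by
  have hG : IsApostolEGF _ _ _ k m r α fun x y z => egf fun p => EHP p x y z := hEHP
  have hc₀ : (((2 : ℝ) ^ ((1 : ℝ) - (k : ℝ)) : ℝ) : ℂ) ≠ 0 :=
    Complex.ofReal_ne_zero.mpr (Real.rpow_pos_of_pos two_pos _).ne'
  have hA : ((a ^ b : ℝ) : ℂ) ≠ 0 :=
    Complex.ofReal_ne_zero.mpr (Real.rpow_pos_of_pos ha b).ne'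
  have hBq : β ^ (b : ℂ) = (β / a) ^ (b : ℂ) * ((a ^ b : ℝ) : ℂ) := by
    rw [Complex.ofReal_cpow ha.le, ← mul_ofReal_cpow_of_pos ha, div_mul_cancel₀]
    exact_mod_cast ha.ne'
  rw [← factorial_mul_coeff_weightedShiftSum_mul, ← factorial_mul_coeff_weightedShiftSum_mul,
    hG.weightedShiftSum_mul_comm hc₀ hA hBq hc.ne' hd.ne']

/-- Symmetry identity II for the unified Apostol type-truncated exponential-Gould-Hopper
polynomials `EHP n x y z = _{eH}P_{n,β}^{(α,m,r)}(x,y,z;k,a,b)`. -/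
theorem symmetry_identity_II
    (a b : ℝ) (ha : 0 < a) (hb : 0 < b) (β : ℂ) (k m r α : ℕ) (hα : 1 ≤ α)
    (EHP : ℕ → ℝ → ℝ → ℝ → ℂ)
    (hEHP : ∀ (x y z : ℝ),
      (PowerSeries.C ((((2 : ℝ) ^ ((1 : ℝ) - (k : ℝ)) : ℝ) : ℂ)) *
          PowerSeries.X ^ k) ^ α * (expC (x : ℂ) * expMonC (y : ℂ) m) =
        (PowerSeries.C (β ^ (b : ℂ)) * expC 1 - PowerSeries.C ((a ^ b : ℝ) : ℂ)) ^ α *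
          ((1 - PowerSeries.C (z : ℂ) * PowerSeries.X ^ r) *
            PowerSeries.mk (fun n => EHP n x y z / n.factorial)))
    (c d : ℕ) (hc : 0 < c) (hd : 0 < d) (x y z X1 Y1 Z1 : ℝ) (n : ℕ) :
    (∑ l ∈ Finset.range (n + 1), (n.choose l : ℂ) * (c : ℂ) ^ (n - l) * (d : ℂ) ^ l *
        ∑ i ∈ Finset.range c, ∑ j ∈ Finset.range d,
          ((β / (a : ℂ)) ^ (b : ℂ)) ^ (i + j) *
            EHP (n - l) ((d : ℝ) * x + ((d : ℝ) / (c : ℝ)) * i)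
              ((d : ℝ) ^ m * y) ((d : ℝ) ^ r * z) *
            EHP l ((c : ℝ) * X1 + ((c : ℝ) / (d : ℝ)) * j)
              ((c : ℝ) ^ m * Y1) ((c : ℝ) ^ r * Z1)) =
      ∑ l ∈ Finset.range (n + 1), (n.choose l : ℂ) * (d : ℂ) ^ (n - l) * (c : ℂ) ^ l *
        ∑ i ∈ Finset.range d, ∑ j ∈ Finset.range c,
          ((β / (a : ℂ)) ^ (b : ℂ)) ^ (i + j) *
            EHP (n - l) ((c : ℝ) * x + ((c : ℝ) / (d : ℝ)) * i)
              ((c : ℝ) ^ m * y) ((c : ℝ) ^ r * z) *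
            EHP l ((d : ℝ) * X1 + ((d : ℝ) / (c : ℝ)) * j)
              ((d : ℝ) ^ m * Y1) ((d : ℝ) ^ r * Z1) :=
  symmetry_identity_II_general a b ha β k m r α EHP hEHP c d hc hd x y z X1 Y1 Z1 n
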